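/- Let 0 < ε ≤ 1, m > 0 and T > 0. Set b = e^{T√(1+m²)} and C = m²b⁴ + 2m²b² + 4b² + m². Then Δ(ε,m,T) = (1/T)·ln((m²b⁴ + 2b² + m² + m(b² − 1)√C)/(2(1 + m²)b²)) − 2(m + ε). -/

import Mathlib

open Real Filter Set

/-- The `2T`-periodic square wave: `+1` on `[0,T)`, `-1` on `[T,2T)`. -/
noncomputable def squareWave (T t : ℝ) : ℝ :=
  if Int.fract (t / (2 * T)) < 1 / 2 then 1 else -1

/-- A solution of the switched system `F(m,T)`: a continuous function satisfying
`dV/dt = 2(u(t) - m sinh V)` away from the switching times `nT`, `n ∈ ℤ`. -/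
def IsSolF (m T : ℝ) (V : ℝ → ℝ) : Prop :=
  Continuous V ∧ ∀ t : ℝ, (∀ n : ℤ, t ≠ n * T) →
    HasDerivAt V (2 * (squareWave T t - m * Real.sinh (V t))) t

/-- The quantity `Δ(ε,m,T)` associated with the periodic solution `P` of `F(m,T)`. -/
noncomputable def DeltaP (ε m T : ℝ) (P : ℝ → ℝ) : ℝ :=
  (1 / (2 * T)) * ∫ s in (0:ℝ)..(2 * T), 2 * (m * Real.cosh (P s) - m - ε)

/-!
On `[0, T]` the substitution `p = m e^V` turns `F(m,T)` into the Riccati equation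
`p' = (1 + r - p)(p + r - 1)` with `r = √(1 + m²)`, which is solved explicitly: the ratio
`(1 + r - p)/(p + r - 1)` of the distances to the two equilibria decays like `e^{-2rt}`. In
particular a solution starting below the equilibrium `m sinh V = 1` stays below it. On `[T, 2T]`
the same holds for `-P(· + T)`. The two resulting relations between the values of `P` at `0`
and `T` force `P T = -P 0` and then determine `e^{P 0}`. Finally, along the equation
`2m cosh V = d/dt (-log (1 - m sinh V))`, so the integral over a period is
`2 log ((1 - σ)/(1 + σ))` with `σ = m sinh (P 0)`, and this is the stated logarithm.
-/

lemma squareWave_of_mem_Ico {T t : ℝ} (hT : 0 < T) (ht : t ∈ Ico 0 (2 * T)) :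
    squareWave T t = if t < T then 1 else -1 := by
  have h2T : 0 < 2 * T := by positivity
  have hfract : Int.fract (t / (2 * T)) = t / (2 * T) :=
    Int.fract_eq_self.2 ⟨div_nonneg ht.1 h2T.le, (div_lt_one h2T).2 ht.2⟩
  have hiff : t / (2 * T) < 1 / 2 ↔ t < T := by
    rw [div_lt_div_iff₀ h2T two_pos]; constructor <;> intro h <;> linarith
  simp only [squareWave, hfract, hiff]

lemma ne_intCast_mul_of_mem_Ioo {T t : ℝ} (hT : 0 < T) {k : ℤ}
    (ht : t ∈ Ioo (k * T) ((k + 1) * T)) (n : ℤ) : t ≠ n * T := by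
  rintro rfl
  have hkn : k < n := by exact_mod_cast lt_of_mul_lt_mul_right ht.1 hT.le
  have hnk : n < k + 1 := by exact_mod_cast lt_of_mul_lt_mul_right ht.2 hT.le
  omega

namespace IsSolF

variable {m T : ℝ} {V : ℝ → ℝ}

lemma hasDerivAt_of_mem_Ioo_zero (hV : IsSolF m T V) (hT : 0 < T) {t : ℝ}
    (ht : t ∈ Ioo 0 T) : HasDerivAt V (2 * (1 - m * sinh (V t))) t := by
  have := hV.2 t (ne_intCast_mul_of_mem_Ioo hT (k := 0) (by simpa using ht))
  rwa [squareWave_of_mem_Ico hT ⟨ht.1.le, by linarith [ht.2]⟩, if_pos ht.2] at this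

lemma hasDerivAt_of_mem_Ioo_T (hV : IsSolF m T V) (hT : 0 < T) {t : ℝ}
    (ht : t ∈ Ioo T (2 * T)) : HasDerivAt V (2 * (-1 - m * sinh (V t))) t := by
  have := hV.2 t (ne_intCast_mul_of_mem_Ioo hT (k := 1)
    ⟨by simpa using ht.1, by push_cast; linarith [ht.2]⟩)
  rwa [squareWave_of_mem_Ico hT ⟨by linarith [ht.1], ht.2⟩, if_neg ht.1.not_gt] at this

lemma hasDerivAt_neg_comp_add (hV : IsSolF m T V) (hT : 0 < T) {t : ℝ}
    (ht : t ∈ Ioo 0 T) :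
    HasDerivAt (fun s ↦ -V (s + T)) (2 * (1 - m * sinh (-V (t + T)))) t := by
  have h := hV.hasDerivAt_of_mem_Ioo_T hT (t := t + T) ⟨by linarith [ht.1], by linarith [ht.2]⟩
  rw [sinh_neg]
  exact (h.comp_add_const t T).neg.congr_deriv (by ring)

end IsSolF

lemma eq_of_hasDerivAt_zero_of_mem_Icc {f : ℝ → ℝ} {a b : ℝ} (hf : ContinuousOn f (Icc a b))
    (hf' : ∀ x ∈ Ioo a b, HasDerivAt f 0 x) : ∀ x ∈ Icc a b, f x = f a := by
  intro x hx
  have hint := intervalIntegral.integral_eq_sub_of_hasDerivAt_of_le hx.1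
    (hf.mono (Icc_subset_Icc_right hx.2)) (fun y hy ↦ hf' y ⟨hy.1, hy.2.trans_le hx.2⟩)
    intervalIntegrable_const
  rw [intervalIntegral.integral_zero] at hint
  linarith

section Riccati

variable {m r T : ℝ} {V : ℝ → ℝ}

noncomputable def riccatiInvariant (m r : ℝ) (V : ℝ → ℝ) (t : ℝ) : ℝ :=
  (1 + r - m * exp (V t)) / (m * exp (V t) + r - 1) * exp (2 * r * t)

lemma one_add_sub_mul_exp_mul (hr : r ^ 2 = 1 + m ^ 2) (v : ℝ) :
    (1 + r - m * exp v) * (m * exp v + r - 1) = 2 * m * exp v * (1 - m * sinh v) := by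
  rw [sinh_eq, exp_neg]
  field_simp
  linear_combination hr

lemma mul_exp_add_sub_one_pos (hm : 0 < m) (hr : 1 < r) (v : ℝ) : 0 < m * exp v + r - 1 := by
  have := mul_pos hm (exp_pos v)
  linarith

lemma hasDerivAt_riccatiInvariant (hm : 0 < m) (hr : r ^ 2 = 1 + m ^ 2) (hr1 : 1 < r) {t : ℝ}
    (hV : HasDerivAt V (2 * (1 - m * sinh (V t))) t) :
    HasDerivAt (riccatiInvariant m r V) 0 t := by
  have hp : HasDerivAt (fun s ↦ m * exp (V s))
      ((1 + r - m * exp (V t)) * (m * exp (V t) + r - 1)) t := by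
    rw [one_add_sub_mul_exp_mul hr]
    exact (hV.exp.const_mul m).congr_deriv (by ring)
  have hB := (mul_exp_add_sub_one_pos hm hr1 (V t)).ne'
  have h := ((hp.const_sub (1 + r)).div ((hp.add_const r).sub_const 1) (by simpa using hB)).mul
    ((hasDerivAt_id t).const_mul (2 * r)).exp
  refine h.congr_deriv ?_
  simp only [id, Pi.div_apply]
  field_simp
  ring

lemma riccatiInvariant_eq_of_mem_Icc (hm : 0 < m) (hr : r ^ 2 = 1 + m ^ 2) (hr1 : 1 < r)
    (hVc : ContinuousOn V (Icc 0 T))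
    (hV : ∀ t ∈ Ioo 0 T, HasDerivAt V (2 * (1 - m * sinh (V t))) t) :
    ∀ t ∈ Icc 0 T, riccatiInvariant m r V t = riccatiInvariant m r V 0 := by
  refine eq_of_hasDerivAt_zero_of_mem_Icc ?_
    fun t ht ↦ hasDerivAt_riccatiInvariant hm hr hr1 (hV t ht)
  have hB : ∀ t ∈ Icc 0 T, m * exp (V t) + r - 1 ≠ 0 :=
    fun t _ ↦ (mul_exp_add_sub_one_pos hm hr1 (V t)).ne'
  unfold riccatiInvariant
  fun_prop (disch := assumption)

lemma riccatiInvariant_pos_iff (hm : 0 < m) (hr : r ^ 2 = 1 + m ^ 2) (hr1 : 1 < r) (t : ℝ) :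
    0 < riccatiInvariant m r V t ↔ m * sinh (V t) < 1 := by
  have hB := mul_exp_add_sub_one_pos hm hr1 (V t)
  have hAB := one_add_sub_mul_exp_mul hr (V t)
  have hmexp : 0 < 2 * m * exp (V t) := by positivity
  rw [riccatiInvariant, mul_pos_iff_of_pos_right (exp_pos _), div_pos_iff_of_pos_right hB,
    ← mul_pos_iff_of_pos_right hB, hAB, mul_pos_iff_of_pos_left hmexp, sub_pos]

lemma sinh_lt_one_of_mem_Icc (hm : 0 < m) (hr : r ^ 2 = 1 + m ^ 2) (hr1 : 1 < r)
    (hVc : ContinuousOn V (Icc 0 T))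
    (hV : ∀ t ∈ Ioo 0 T, HasDerivAt V (2 * (1 - m * sinh (V t))) t)
    (h0 : m * sinh (V 0) < 1) : ∀ t ∈ Icc 0 T, m * sinh (V t) < 1 := by
  intro t ht
  rw [← riccatiInvariant_pos_iff hm hr hr1, riccatiInvariant_eq_of_mem_Icc hm hr hr1 hVc hV t ht,
    riccatiInvariant_pos_iff hm hr hr1]
  exact h0

lemma riccati_relation_of_hasDerivAt (hm : 0 < m) (hr : r ^ 2 = 1 + m ^ 2) (hr1 : 1 < r)
    (hT : 0 ≤ T) (hVc : ContinuousOn V (Icc 0 T))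
    (hV : ∀ t ∈ Ioo 0 T, HasDerivAt V (2 * (1 - m * sinh (V t))) t) :
    (1 + r - m * exp (V T)) * (m * exp (V 0) + r - 1) * exp (T * r) ^ 2 =
      (1 + r - m * exp (V 0)) * (m * exp (V T) + r - 1) := by
  have h := riccatiInvariant_eq_of_mem_Icc hm hr hr1 hVc hV T ⟨hT, le_rfl⟩
  have hB0 := (mul_exp_add_sub_one_pos hm hr1 (V 0)).ne'
  have hBT := (mul_exp_add_sub_one_pos hm hr1 (V T)).ne'
  rw [riccatiInvariant, riccatiInvariant, mul_zero, exp_zero, mul_one, div_mul_eq_mul_div,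
    div_eq_div_iff hBT hB0] at h
  have hexp : exp (T * r) ^ 2 = exp (2 * r * T) := by rw [← exp_nat_mul]; ring_nf
  rw [hexp]
  linear_combination h

end Riccati

lemma integral_two_mul_cosh {m T : ℝ} {V : ℝ → ℝ} (hT : 0 ≤ T)
    (hVc : ContinuousOn V (Icc 0 T))
    (hV : ∀ t ∈ Ioo 0 T, HasDerivAt V (2 * (1 - m * sinh (V t))) t)
    (hlt : ∀ t ∈ Icc 0 T, m * sinh (V t) < 1) :
    ∫ t in 0..T, 2 * (m * cosh (V t)) = log (1 - m * sinh (V 0)) - log (1 - m * sinh (V T)) := by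
  have hpos : ∀ t ∈ Icc 0 T, 1 - m * sinh (V t) ≠ 0 := fun t ht ↦ (sub_pos.2 (hlt t ht)).ne'
  have hFc : ContinuousOn (fun t ↦ -log (1 - m * sinh (V t))) (Icc 0 T) := by
    fun_prop (disch := assumption)
  have hcosh : ContinuousOn (fun t ↦ 2 * (m * cosh (V t))) (uIcc 0 T) := by
    rw [uIcc_of_le hT]; fun_prop
  rw [intervalIntegral.integral_eq_sub_of_hasDerivAt_of_le hT hFc _ hcosh.intervalIntegrable]
  · ring
  intro t ht
  have hne := hpos t (Ioo_subset_Icc_self ht)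
  refine ((((hV t ht).sinh.const_mul m).const_sub 1).log hne).neg.congr_deriv ?_
  field_simp

section Algebra

variable {m r b : ℝ}

lemma mul_eq_one_of_riccati_relations (hm : 0 < m) (hr : r ^ 2 = 1 + m ^ 2) (hb : 1 < b)
    {x y : ℝ} (hx : 0 < x) (hy : 0 < y)
    (hxy : (1 + r - m * y) * (m * x + r - 1) * b ^ 2 = (1 + r - m * x) * (m * y + r - 1))
    (hyx : (1 + r - m * x⁻¹) * (m * y⁻¹ + r - 1) * b ^ 2 =
      (1 + r - m * y⁻¹) * (m * x⁻¹ + r - 1)) :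
    x * y = 1 := by
  field_simp at hyx
  have h : (b ^ 2 - 1) * (2 * m ^ 2) * (1 - x * y) = 0 := by
    linear_combination hxy - hyx - (b ^ 2 - 1) * (1 - x * y) * hr
  have hne : (b ^ 2 - 1) * (2 * m ^ 2) ≠ 0 := by
    have : 1 < b ^ 2 := one_lt_pow₀ hb two_ne_zero
    apply mul_ne_zero <;> nlinarith
  linarith [(mul_eq_zero.1 h).resolve_left hne]

lemma sq_mul_eq_of_riccati_relation (hm : 0 < m) (hr : r ^ 2 = 1 + m ^ 2) {x : ℝ} (hx : 0 < x)
    (h : (1 + r - m * x⁻¹) * (m * x + r - 1) * b ^ 2 = (1 + r - m * x) * (m * x⁻¹ + r - 1)) :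
    x ^ 2 * (r * (b ^ 2 + 1) + (b ^ 2 - 1)) = r * (b ^ 2 + 1) - (b ^ 2 - 1) := by
  field_simp at h
  have h' :
      m * (x ^ 2 * (r * (b ^ 2 + 1) + (b ^ 2 - 1)) - (r * (b ^ 2 + 1) - (b ^ 2 - 1))) = 0 := by
    linear_combination h - x * (b ^ 2 - 1) * hr
  linarith [(mul_eq_zero.1 h').resolve_left hm.ne']

lemma mul_sinh_of_exp_sq_mul_eq (hm : 0 < m) (hr : r ^ 2 = 1 + m ^ 2) (hr0 : 0 < r) (hb : 1 < b)
    {v : ℝ} (hv : exp v ^ 2 * (r * (b ^ 2 + 1) + (b ^ 2 - 1)) = r * (b ^ 2 + 1) - (b ^ 2 - 1)) :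
    0 < 1 - m * sinh v ∧ 0 < 1 + m * sinh v ∧
      (1 - m * sinh v) / (1 + m * sinh v) =
        (m ^ 2 * b ^ 4 + 2 * b ^ 2 + m ^ 2 +
          m * (b ^ 2 - 1) * √(m ^ 2 * b ^ 4 + 2 * m ^ 2 * b ^ 2 + 4 * b ^ 2 + m ^ 2)) /
        (2 * (1 + m ^ 2) * b ^ 2) := by
  have hσ : 2 * exp v * (m * sinh v) = m * (exp v ^ 2 - 1) := by
    rw [sinh_eq, exp_neg]; field_simp
  set x := exp v
  set g := r * (b ^ 2 + 1) + (b ^ 2 - 1)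
  have hx : 0 < x := exp_pos v
  have hb2 : 0 < b ^ 2 - 1 := by nlinarith
  have hg : 0 < g := by positivity
  have hsq : (x * g) ^ 2 = m ^ 2 * b ^ 4 + 2 * m ^ 2 * b ^ 2 + 4 * b ^ 2 + m ^ 2 := by
    linear_combination g * hv + (b ^ 2 + 1) ^ 2 * hr
  have hsqrt : √(m ^ 2 * b ^ 4 + 2 * m ^ 2 * b ^ 2 + 4 * b ^ 2 + m ^ 2) = x * g := by
    rw [← hsq, sqrt_sq (by positivity)]
  have hsub : x * g * (1 - m * sinh v) = x * g + m * (b ^ 2 - 1) := by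
    linear_combination (-g / 2) * hσ - m / 2 * hv
  have hadd : x * g * (1 + m * sinh v) = x * g - m * (b ^ 2 - 1) := by
    linear_combination (g / 2) * hσ + m / 2 * hv
  have hprod : (x * g + m * (b ^ 2 - 1)) * (x * g - m * (b ^ 2 - 1)) = 4 * (1 + m ^ 2) * b ^ 2 := by
    linear_combination hsq
  have hxg : 0 < x * g := by positivity
  have hdiff : 0 < x * g - m * (b ^ 2 - 1) := by
    have : 0 < (x * g + m * (b ^ 2 - 1)) * (x * g - m * (b ^ 2 - 1)) := by rw [hprod]; positivity
    exact pos_of_mul_pos_right this (by positivity)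
  have h1 : 0 < 1 - m * sinh v := pos_of_mul_pos_right (by rw [hsub]; positivity) hxg.le
  have h2 : 0 < 1 + m * sinh v := pos_of_mul_pos_right (by rw [hadd]; exact hdiff) hxg.le
  refine ⟨h1, h2, ?_⟩
  -- By `hsub` and `hadd` the ratio is `(x g + m (b² - 1))/(x g - m (b² - 1))`; rationalise the
  -- denominator with `hprod`.
  rw [hsqrt, div_eq_div_iff h2.ne' (by positivity)]
  refine mul_left_cancel₀ hxg.ne' ?_
  linear_combination (2 * (1 + m ^ 2) * b ^ 2) * hsub -
    (m ^ 2 * b ^ 4 + 2 * b ^ 2 + m ^ 2 + m * (b ^ 2 - 1) * (x * g)) * hadd - m * (b ^ 2 - 1) * hsq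

end Algebra

namespace IsSolF

variable {m T r : ℝ} {P : ℝ → ℝ}

lemma riccati_relation (hP : IsSolF m T P) (hm : 0 < m) (hT : 0 < T) (hr : r ^ 2 = 1 + m ^ 2)
    (hr1 : 1 < r) :
    (1 + r - m * exp (P T)) * (m * exp (P 0) + r - 1) * exp (T * r) ^ 2 =
      (1 + r - m * exp (P 0)) * (m * exp (P T) + r - 1) :=
  riccati_relation_of_hasDerivAt hm hr hr1 hT.le hP.1.continuousOn
    fun _ ht ↦ hP.hasDerivAt_of_mem_Ioo_zero hT ht

lemma apply_T_eq_neg (hP : IsSolF m T P) (hPper : Function.Periodic P (2 * T)) (hm : 0 < m)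
    (hT : 0 < T) (hr : r ^ 2 = 1 + m ^ 2) (hr1 : 1 < r) : P T = -P 0 := by
  have hQ := riccati_relation_of_hasDerivAt (V := fun s ↦ -P (s + T)) hm hr hr1 hT.le
    (hP.1.comp (continuous_add_const T)).neg.continuousOn
    fun _ ht ↦ hP.hasDerivAt_neg_comp_add hT ht
  rw [zero_add, ← two_mul, hPper.eq, exp_neg, exp_neg] at hQ
  have h := mul_eq_one_of_riccati_relations hm hr (one_lt_exp_iff.2 (by positivity)) (exp_pos _)
    (exp_pos _) (hP.riccati_relation hm hT hr hr1) hQ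
  rw [← exp_add, exp_eq_one_iff] at h
  linarith

lemma exp_sq_mul_eq (hP : IsSolF m T P) (hPper : Function.Periodic P (2 * T)) (hm : 0 < m)
    (hT : 0 < T) (hr : r ^ 2 = 1 + m ^ 2) (hr1 : 1 < r) :
    exp (P 0) ^ 2 * (r * (exp (T * r) ^ 2 + 1) + (exp (T * r) ^ 2 - 1)) =
      r * (exp (T * r) ^ 2 + 1) - (exp (T * r) ^ 2 - 1) := by
  have h := hP.riccati_relation hm hT hr hr1
  rw [hP.apply_T_eq_neg hPper hm hT hr hr1, exp_neg] at h
  exact sq_mul_eq_of_riccati_relation hm hr (exp_pos _) h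

lemma integral_two_mul_cosh_period (hP : IsSolF m T P) (hPper : Function.Periodic P (2 * T))
    (hm : 0 < m) (hT : 0 < T) (hr : r ^ 2 = 1 + m ^ 2) (hr1 : 1 < r)
    (h0 : m * sinh (P 0) < 1) :
    ∫ t in 0..2 * T, 2 * (m * cosh (P t)) =
      2 * (log (1 - m * sinh (P 0)) - log (1 + m * sinh (P 0))) := by
  have hPT := hP.apply_T_eq_neg hPper hm hT hr hr1
  have hPc := hP.1
  set Q : ℝ → ℝ := fun s ↦ -P (s + T)
  have hQc : ContinuousOn Q (Icc 0 T) := (hPc.comp (continuous_add_const T)).neg.continuousOn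
  have hP' : ∀ t ∈ Ioo 0 T, HasDerivAt P (2 * (1 - m * sinh (P t))) t :=
    fun _ ht ↦ hP.hasDerivAt_of_mem_Ioo_zero hT ht
  have hQ' : ∀ t ∈ Ioo 0 T, HasDerivAt Q (2 * (1 - m * sinh (Q t))) t :=
    fun _ ht ↦ hP.hasDerivAt_neg_comp_add hT ht
  have hQ0 : Q 0 = P 0 := by simp [Q, hPT]
  have hQT : Q T = -P 0 := by simp only [Q, ← two_mul, hPper.eq]
  have hfirst := integral_two_mul_cosh hT.le hPc.continuousOn hP'
    (sinh_lt_one_of_mem_Icc hm hr hr1 hPc.continuousOn hP' h0)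
  have hsecond := integral_two_mul_cosh hT.le hQc hQ'
    (sinh_lt_one_of_mem_Icc hm hr hr1 hQc hQ' (by rwa [hQ0]))
  have hshift : ∫ t in T..2 * T, 2 * (m * cosh (P t)) = ∫ t in 0..T, 2 * (m * cosh (Q t)) := by
    simp only [Q, cosh_neg]
    rw [intervalIntegral.integral_comp_add_right (fun t ↦ 2 * (m * cosh (P t))), zero_add,
      two_mul]
  have hint : Continuous fun t ↦ 2 * (m * cosh (P t)) := by fun_prop
  rw [← intervalIntegral.integral_add_adjacent_intervals (hint.intervalIntegrable 0 T)
    (hint.intervalIntegrable T (2 * T)), hshift, hfirst, hsecond, hQ0, hQT, hPT, sinh_neg]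
  ring_nf

end IsSolF

lemma DeltaP_eq {ε m T : ℝ} {P : ℝ → ℝ} (hT : T ≠ 0) (hP : Continuous P) :
    DeltaP ε m T P = (1 / (2 * T)) * (∫ t in 0..2 * T, 2 * (m * cosh (P t))) - 2 * (m + ε) := by
  have hint : Continuous fun t ↦ 2 * (m * cosh (P t)) := by fun_prop
  have hsplit : ∀ t, 2 * (m * cosh (P t) - m - ε) = 2 * (m * cosh (P t)) - 2 * (m + ε) :=
    fun t ↦ by ring
  rw [DeltaP, funext hsplit, intervalIntegral.integral_sub (hint.intervalIntegrable _ _)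
    intervalIntegrable_const, intervalIntegral.integral_const, smul_eq_mul, sub_zero]
  field_simp

theorem statement9_general (ε m T : ℝ) (hm : 0 < m) (hT : 0 < T)
    (P : ℝ → ℝ) (hP : IsSolF m T P) (hPper : Function.Periodic P (2 * T))
    (b C : ℝ) (hb : b = Real.exp (T * Real.sqrt (1 + m ^ 2)))
    (hC : C = m ^ 2 * b ^ 4 + 2 * m ^ 2 * b ^ 2 + 4 * b ^ 2 + m ^ 2) :
    DeltaP ε m T P =
      (1 / T) * Real.log ((m ^ 2 * b ^ 4 + 2 * b ^ 2 + m ^ 2 +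
        m * (b ^ 2 - 1) * Real.sqrt C) / (2 * (1 + m ^ 2) * b ^ 2)) - 2 * (m + ε) := by
  set r := √(1 + m ^ 2)
  have hr : r ^ 2 = 1 + m ^ 2 := sq_sqrt (by positivity)
  have hr1 : 1 < r := by nlinarith [sqrt_nonneg (1 + m ^ 2)]
  subst hb hC
  obtain ⟨h1, h2, hratio⟩ := mul_sinh_of_exp_sq_mul_eq hm hr (by linarith)
    (one_lt_exp_iff.2 (by positivity)) (hP.exp_sq_mul_eq hPper hm hT hr hr1)
  rw [DeltaP_eq hT.ne' hP.1, hP.integral_two_mul_cosh_period hPper hm hT hr hr1 (by linarith),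
    ← log_div h1.ne' h2.ne', hratio]
  field_simp

theorem statement9 (ε m T : ℝ) (hε : 0 < ε) (hε1 : ε ≤ 1) (hm : 0 < m) (hT : 0 < T)
    (P : ℝ → ℝ) (hP : IsSolF m T P) (hPper : Function.Periodic P (2 * T))
    (b C : ℝ) (hb : b = Real.exp (T * Real.sqrt (1 + m ^ 2)))
    (hC : C = m ^ 2 * b ^ 4 + 2 * m ^ 2 * b ^ 2 + 4 * b ^ 2 + m ^ 2) :
    DeltaP ε m T P =
      (1 / T) * Real.log ((m ^ 2 * b ^ 4 + 2 * b ^ 2 + m ^ 2 +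
        m * (b ^ 2 - 1) * Real.sqrt C) / (2 * (1 + m ^ 2) * b ^ 2)) - 2 * (m + ε) :=
  statement9_general ε m T hm hT P hP hPper b C hb hC
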